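/- Let Y_1, Y_2, ... be i.i.d. with MGF M_Y satisfying M_Y(t)M_Y(-t) ≥ 1 wherever defined (true for EDMs by convexity of Ψ), and N_m ~ ZTP(1/m) independent of the Y's. Define the alternating compound (Y_{++}^L)_m = Σ_{n=1}^{N_m} (-1)^{n+1} Y_n. Then its MGF converges pointwise to M_Y(t) as m → ∞. -/

import Mathlib

/-!
With `x = 1/m` the sum equals `x · ∑ xⁿ/(n+1)! · c(n+1)`, where `c k = M(t)^⌈k/2⌉ M(-t)^⌊k/2⌋`
satisfies `|c k| ≤ max(|M t|, |M(-t)|)^k`. By dominated convergence the second factor tends to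
its constant term `c 1 = M t` as `x → 0`, while `(eˣ - 1)/x` tends to `exp' 0 = 1`.
-/

open Filter Topology

/-- The MGF at `t` of the alternating sum of `k` i.i.d. copies, with `a = M t`, `b = M (-t)`. -/
def alternatingPow (a b : ℝ) (k : ℕ) : ℝ :=
  a ^ ((k + 1) / 2) * b ^ (k / 2)

lemma abs_alternatingPow_le (a b : ℝ) (k : ℕ) :
    |alternatingPow a b k| ≤ max |a| |b| ^ k := by
  have hk : (k + 1) / 2 + k / 2 = k := by omega
  calc |alternatingPow a b k| = |a| ^ ((k + 1) / 2) * |b| ^ (k / 2) := by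
        rw [alternatingPow, abs_mul, abs_pow, abs_pow]
    _ ≤ max |a| |b| ^ ((k + 1) / 2) * max |a| |b| ^ (k / 2) := by
        gcongr
        exacts [le_max_left _ _, le_max_right _ _]
    _ = max |a| |b| ^ k := by rw [← pow_add, hk]

lemma tendsto_tsum_pow_div_factorial_succ_mul (c : ℕ → ℝ) (R : ℝ) (hc : ∀ k, |c k| ≤ R ^ k) :
    Tendsto (fun x : ℝ => ∑' n : ℕ, x ^ n / (n + 1).factorial * c (n + 1)) (𝓝 0) (𝓝 (c 1)) := by
  have h_sum : Summable fun n : ℕ => R ^ (n + 1) / (n + 1).factorial :=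
    (summable_nat_add_iff 1).2 (Real.summable_pow_div_factorial R)
  have h_lim : ∑' n : ℕ, (0 : ℝ) ^ n / (n + 1).factorial * c (n + 1) = c 1 := by
    rw [tsum_eq_single 0 fun n hn => by simp [hn]]
    simp
  rw [← h_lim]
  refine tendsto_tsum_of_dominated_convergence h_sum
    (fun n => ((continuous_pow n).div_const _).mul continuous_const |>.tendsto 0) ?_
  filter_upwards [Metric.closedBall_mem_nhds (0 : ℝ) one_pos] with x hx n
  rw [mem_closedBall_zero_iff, Real.norm_eq_abs] at hx
  rw [Real.norm_eq_abs, abs_mul, abs_div, abs_pow, Nat.abs_cast, div_mul_eq_mul_div]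
  gcongr
  calc |x| ^ n * |c (n + 1)| ≤ 1 * R ^ (n + 1) := by
        gcongr
        exacts [pow_le_one₀ (abs_nonneg x) hx, hc (n + 1)]
    _ = R ^ (n + 1) := one_mul _

lemma tendsto_inv_exp_sub_one_mul_tsum (c : ℕ → ℝ) (R : ℝ) (hc : ∀ k, |c k| ≤ R ^ k) :
    Tendsto (fun x : ℝ =>
        (Real.exp x - 1)⁻¹ * ∑' n : ℕ, x ^ (n + 1) / (n + 1).factorial * c (n + 1))
      (𝓝[≠] 0) (𝓝 (c 1)) := by
  have h_slope : Tendsto (fun x : ℝ => x⁻¹ * (Real.exp x - 1)) (𝓝[≠] 0) (𝓝 1) := by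
    simpa using (Real.hasDerivAt_exp 0).tendsto_slope_zero
  have h_lim := (h_slope.inv₀ one_ne_zero).mul
    ((tendsto_tsum_pow_div_factorial_succ_mul c R hc).mono_left nhdsWithin_le_nhds)
  rw [inv_one, one_mul] at h_lim
  refine h_lim.congr' ?_
  filter_upwards [self_mem_nhdsWithin] with x (hx : x ≠ 0)
  rw [mul_inv, inv_inv, mul_comm x, mul_assoc, ← tsum_mul_left]
  congr 2 with n
  ring

theorem ztp_alternating_compound_mgf_tendsto_general (M : ℝ → ℝ) (t : ℝ) :
    Tendsto (fun m : ℕ =>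
        (Real.exp (1 / (m : ℝ)) - 1)⁻¹ *
          ∑' n : ℕ, ((1 / (m : ℝ)) ^ (n + 1) / (n + 1).factorial)
            * M t ^ ((n + 1 + 1) / 2) * M (-t) ^ ((n + 1) / 2))
      atTop (nhds (M t)) := by
  have h_ne : Tendsto (fun m : ℕ => 1 / (m : ℝ)) atTop (𝓝[≠] 0) :=
    tendsto_nhdsWithin_iff.2 ⟨tendsto_one_div_atTop_nhds_zero_nat,
      (eventually_ne_atTop 0).mono fun m hm => by simpa using hm⟩
  have h := (tendsto_inv_exp_sub_one_mul_tsum _ _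
    (abs_alternatingPow_le (M t) (M (-t)))).comp h_ne
  simpa only [Function.comp_def, alternatingPow, ← mul_assoc, pow_one, Nat.reduceAdd, Nat.reduceDiv,
    pow_zero, mul_one] using h

/-- **Convergence of the alternating compound MGF (linear linkage).**
Let `M` be the MGF of the i.i.d. summands, with `M t > 0`, `M (-t) > 0` and
`M t * M (-t) ≥ 1` (true for additive EDMs by convexity of `Ψ`), and let
`N_m ~ ZTP(1/m)` be independent of the `Y`'s.  The MGF of the alternating compound
`(Y₊₊ᴸ)_m = ∑_{n=1}^{N_m} (-1)^{n+1} Y n`, namely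
`(e^{1/m} - 1)⁻¹ ∑_{n ≥ 1} ((1/m)^n / n!) M(t)^{⌈n/2⌉} M(-t)^{⌊n/2⌋}`,
converges pointwise to `M t` as `m → ∞`. -/
theorem ztp_alternating_compound_mgf_tendsto (M : ℝ → ℝ) (t : ℝ)
    (hMp : 0 < M t) (hMm : 0 < M (-t)) (hM1 : 1 ≤ M t * M (-t)) :
    Tendsto (fun m : ℕ =>
        (Real.exp (1 / (m : ℝ)) - 1)⁻¹ *
          ∑' n : ℕ, ((1 / (m : ℝ)) ^ (n + 1) / (n + 1).factorial)
            * M t ^ ((n + 1 + 1) / 2) * M (-t) ^ ((n + 1) / 2))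
      atTop (nhds (M t)) :=
  ztp_alternating_compound_mgf_tendsto_general M t
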